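/- Let m ≥ 1, d ≥ 1 and n = (m+1)d. For each i ∈ {1,…,d} let Y_i ∈ ℝ^n be the vector whose coordinates in positions (i−1)(m+1)+1 through i(m+1) are (1, σ_{0,i}, σ_{1,i}, …, σ_{m−1,i}) and whose other coordinates are zero, where the md real numbers {σ_{j,i} : 0 ≤ j ≤ m−1, 1 ≤ i ≤ d} form a family that is algebraically independent over ℚ. Then for every nonempty J ⊆ {1,…,d} and every e ∈ {#J, …, #J·(m+1) − 1}, the subspace A_J = span{Y_j : j ∈ J} (of dimension #J) is (e, #J − g(#J,e,n))-irrational. -/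

import Mathlib

noncomputable section

open Finset Module

/-- A vector of `ℝⁿ` with integer coordinates. -/
def IsIntVec {n : ℕ} (v : EuclideanSpace ℝ (Fin n)) : Prop :=
  ∀ i, ∃ z : ℤ, v i = (z : ℝ)

/-- A rational subspace of `ℝⁿ`: one spanned by vectors with rational coordinates. -/
def IsRationalSubspace {n : ℕ} (B : Submodule ℝ (EuclideanSpace ℝ (Fin n))) : Prop :=
  ∃ s : Set (EuclideanSpace ℝ (Fin n)),
    (∀ v ∈ s, ∀ i, ∃ q : ℚ, v i = (q : ℝ)) ∧ Submodule.span ℝ s = B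

/-- `A` is `(e,j)`-irrational: every rational subspace `B` of dimension `e` satisfies
`dim (A ⊓ B) < j + g(dim A, e, n)` where `g(d,e,n) = max 0 (d+e-n)`. -/
def IsIrrational {n : ℕ} (A : Submodule ℝ (EuclideanSpace ℝ (Fin n))) (e j : ℕ) : Prop :=
  ∀ B : Submodule ℝ (EuclideanSpace ℝ (Fin n)),
    IsRationalSubspace B → finrank ℝ B = e →
      finrank ℝ ↥(A ⊓ B) < j + (finrank ℝ A + e - n)

/-- The angle `ω(X,Y) = ‖X∧Y‖ / (‖X‖·‖Y‖)`. -/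
def omegaAngle {n : ℕ} (X Y : EuclideanSpace ℝ (Fin n)) : ℝ :=
  Real.sqrt (‖X‖ ^ 2 * ‖Y‖ ^ 2 - (inner ℝ X Y : ℝ) ^ 2) / (‖X‖ * ‖Y‖)

/-- First angle `ψ₁(A,B)` between two subspaces. -/
def psiOne {n : ℕ} (A B : Submodule ℝ (EuclideanSpace ℝ (Fin n))) : ℝ :=
  sInf {t | ∃ X ∈ A, X ≠ 0 ∧ ∃ Y ∈ B, Y ≠ 0 ∧ t = omegaAngle X Y}

/-- `‖X₁ ∧ ⋯ ∧ X_e‖`, as the square root of the Gram determinant. -/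
def gramNorm {n e : ℕ} (X : Fin e → EuclideanSpace ℝ (Fin n)) : ℝ :=
  Real.sqrt (Matrix.of fun i j : Fin e => (inner ℝ (X i) (X j) : ℝ)).det

/-- `X` is a `ℤ`-basis of the lattice `B ∩ ℤⁿ`. -/
def IsZBasis {n e : ℕ} (X : Fin e → EuclideanSpace ℝ (Fin n))
    (B : Submodule ℝ (EuclideanSpace ℝ (Fin n))) : Prop :=
  (∀ i, X i ∈ B) ∧ (∀ i, IsIntVec (X i)) ∧ LinearIndependent ℝ X ∧
    ∀ v ∈ B, IsIntVec v → ∃ c : Fin e → ℤ, v = ∑ i, (c i : ℝ) • X i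

/-- The height `H(B)` of a rational subspace: the common value of `‖X₁ ∧ ⋯ ∧ X_e‖`
over `ℤ`-bases of the lattice `B ∩ ℤⁿ`. -/
def height {n : ℕ} (B : Submodule ℝ (EuclideanSpace ℝ (Fin n))) : ℝ :=
  sSup {h | ∃ e : ℕ, ∃ X : Fin e → EuclideanSpace ℝ (Fin n), IsZBasis X B ∧ h = gramNorm X}

/-- The Diophantine exponent `μ_n(A|e)₁ ∈ ℝ ∪ {+∞}`. -/
def diophExp {n : ℕ} (A : Submodule ℝ (EuclideanSpace ℝ (Fin n))) (e : ℕ) : EReal :=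
  sSup {x : EReal | ∃ μ : ℝ, x = (μ : ℝ) ∧ 0 < μ ∧
    {B : Submodule ℝ (EuclideanSpace ℝ (Fin n)) |
      IsRationalSubspace B ∧ finrank ℝ B = e ∧ psiOne A B ≤ height B ^ (-μ)}.Infinite}

/-- The vector `Y_i ∈ ℝⁿ` (`n = (m+1)d`, indices `0`-based) whose coordinates in the `i`-th
block of length `m+1` are `(1, σ 0 i, σ 1 i, …, σ (m−1) i)` and which vanishes elsewhere. -/
def Yvec (n m : ℕ) (σ : ℕ → ℕ → ℝ) (i : ℕ) : EuclideanSpace ℝ (Fin n) :=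
  WithLp.toLp 2 fun t => if (t : ℕ) = i * (m + 1) then 1
    else if i * (m + 1) < (t : ℕ) ∧ (t : ℕ) < (i + 1) * (m + 1) then
      σ ((t : ℕ) - i * (m + 1) - 1) i
    else 0

/-!
A `ℚ`-linear map `φ : ℝ → ℝ` applied coordinatewise maps a rational subspace `B` into itself:
`B` is the real span of rational vectors and `φ (r * q) = q * φ r` for rational `q`. Because
`1, σ 0 j, …, σ (m-1) j` are linearly independent over `ℚ`, there are such maps sending `Y_j`
to each standard basis vector of the `j`-th block. Hence a rational `B` containing `A_J`
contains `#J * (m + 1) > e` independent vectors, so `A_J ⊄ B` and `dim (A_J ⊓ B) < #J`,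
which is the required bound.
-/

theorem AlgebraicIndependent.linearIndependent_option_elim {ι R A : Type*} [CommRing R]
    [CommRing A] [Algebra R A] {x : ι → A} (hx : AlgebraicIndependent R x) :
    LinearIndependent R (fun o : Option ι => o.elim 1 x) := by
  set exponent : Option ι → ι →₀ ℕ := fun o => o.elim 0 fun i => Finsupp.single i 1
  have hexponent : Function.Injective exponent := by
    rintro (_ | i) (_ | j) h
    exacts [rfl, absurd h.symm (by simp [exponent]), absurd h (by simp [exponent]),
      by simpa [exponent, Finsupp.single_left_inj] using h]
  have hmonomials :
      LinearIndependent R fun s => (MvPolynomial.monomial s 1 : MvPolynomial ι R) := by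
    simpa using (MvPolynomial.basisMonomials ι R).linearIndependent
  have hfamily : (fun o : Option ι => o.elim 1 x) =
      fun o => MvPolynomial.aeval x (MvPolynomial.monomial (exponent o) (1 : R)) := by
    ext1 o; cases o <;> simp [exponent, MvPolynomial.aeval_monomial]
  rw [hfamily]
  exact (hmonomials.comp exponent hexponent).map' (MvPolynomial.aeval x).toLinearMap
    (LinearMap.ker_eq_bot.mpr (algebraicIndependent_iff_injective_aeval.mp hx))

theorem LinearIndependent.exists_linearMap_apply_eq_single {ι K V : Type*} [DivisionRing K]
    [AddCommGroup V] [Module K V] {v : ι → V} (hv : LinearIndependent K v) :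
    ∃ f : V →ₗ[K] ι →₀ K, ∀ i, f (v i) = Finsupp.single i 1 := by
  obtain ⟨f, hf⟩ := (Finsupp.linearCombination K v).exists_leftInverse_of_injective
    (LinearMap.ker_eq_bot.mpr hv)
  exact ⟨f, fun i => by simpa using LinearMap.congr_fun hf (Finsupp.single i 1)⟩

theorem IsRationalSubspace.toLp_comp_mem {n : ℕ} {B : Submodule ℝ (EuclideanSpace ℝ (Fin n))}
    (hB : IsRationalSubspace B) (φ : ℝ →ₗ[ℚ] ℝ) {x : EuclideanSpace ℝ (Fin n)} (hx : x ∈ B) :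
    WithLp.toLp 2 (fun t => φ (x t)) ∈ B := by
  obtain ⟨s, hs, rfl⟩ := hB
  induction hx using Submodule.span_induction generalizing φ with
  | mem x hx =>
    convert Submodule.smul_mem _ (φ 1) (Submodule.subset_span hx) using 1
    ext t
    obtain ⟨q, hq⟩ := hs x hx t
    simp [hq, ← Rat.smul_one_eq_cast, mul_comm]
  | zero =>
    simp only [WithLp.ofLp_zero, Pi.zero_apply, map_zero]
    exact (Submodule.span ℝ s).zero_mem
  | add x y _ _ hx hy =>
    convert (Submodule.span ℝ s).add_mem (hx φ) (hy φ) using 1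
    ext; simp
  | smul r x _ hx => simpa using hx (φ ∘ₗ LinearMap.mulLeft ℚ r)

section Blocks

variable {m d : ℕ}

def blockIndex (j : Fin d) (l : Fin (m + 1)) : Fin ((m + 1) * d) :=
  ⟨j * (m + 1) + l, by nlinarith [j.isLt, l.isLt]⟩

def blockEntries (σ : ℕ → ℕ → ℝ) (j : Fin d) : Fin (m + 1) → ℝ :=
  Fin.cons 1 fun l : Fin m => σ l j

theorem blockIndex_inj {j j' : Fin d} {l l' : Fin (m + 1)} :
    blockIndex j l = blockIndex j' l' ↔ j = j' ∧ l = l' := by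
  refine ⟨fun h => ?_, fun ⟨hj, hl⟩ => hj ▸ hl ▸ rfl⟩
  have h : (j : ℕ) * (m + 1) + l = j' * (m + 1) + l' := congrArg Fin.val h
  have hdiv : ∀ (a : Fin d) (b : Fin (m + 1)), ((a : ℕ) * (m + 1) + b) / (m + 1) = a :=
    fun a b => by
      rw [Nat.add_comm, Nat.add_mul_div_right _ _ (Nat.succ_pos m), Nat.div_eq_of_lt b.isLt,
        zero_add]
  have hj : (j : ℕ) = j' := by simpa only [hdiv] using congrArg (· / (m + 1)) h
  exact ⟨Fin.ext hj, Fin.ext (by rw [hj] at h; omega)⟩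

theorem Yvec_apply_blockIndex (σ : ℕ → ℕ → ℝ) (j : Fin d) (l : Fin (m + 1)) :
    Yvec ((m + 1) * d) m σ j (blockIndex j l) = blockEntries σ j l := by
  induction l using Fin.cases with
  | zero => simp [Yvec, blockIndex, blockEntries]
  | succ l =>
    have hsucc : ((j : ℕ) + 1) * (m + 1) = j * (m + 1) + (m + 1) := by ring
    simp only [Yvec, blockIndex, blockEntries, Fin.cons_succ, PiLp.toLp_apply, Fin.val_succ]
    rw [if_neg (by omega), if_pos (by omega)]
    congr 1
    omega

theorem Yvec_apply_of_forall_ne (σ : ℕ → ℕ → ℝ) {j : Fin d} {t : Fin ((m + 1) * d)}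
    (ht : ∀ l, t ≠ blockIndex j l) : Yvec ((m + 1) * d) m σ j t = 0 := by
  have hsucc : ((j : ℕ) + 1) * (m + 1) = j * (m + 1) + (m + 1) := by ring
  have hblock : ¬ ((j : ℕ) * (m + 1) ≤ t ∧ (t : ℕ) < (j + 1) * (m + 1)) := by
    rintro ⟨h₁, h₂⟩
    exact ht ⟨t - j * (m + 1), by omega⟩ (Fin.ext (by simp only [blockIndex]; omega))
  simp only [Yvec, PiLp.toLp_apply]
  rw [if_neg (by omega), if_neg (by omega)]

theorem toLp_comp_Yvec (σ : ℕ → ℕ → ℝ) (j : Fin d) (φ : ℝ →ₗ[ℚ] ℝ) (l₀ : Fin (m + 1))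
    (hφ : ∀ l, φ (blockEntries σ j l) = if l = l₀ then 1 else 0) :
    WithLp.toLp 2 (fun t => φ (Yvec ((m + 1) * d) m σ j t)) =
      EuclideanSpace.single (blockIndex j l₀) 1 := by
  ext t
  by_cases ht : ∃ l, t = blockIndex j l
  · obtain ⟨l, rfl⟩ := ht
    simp [Yvec_apply_blockIndex, hφ, blockIndex_inj]
  · push Not at ht
    simp [Yvec_apply_of_forall_ne σ ht, ht l₀]

theorem IsRationalSubspace.single_blockIndex_mem {σ : ℕ → ℕ → ℝ}
    (hσ : AlgebraicIndependent ℚ fun p : Fin m × Fin d => σ p.1 p.2)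
    {B : Submodule ℝ (EuclideanSpace ℝ (Fin ((m + 1) * d)))} (hB : IsRationalSubspace B)
    {j : Fin d} (hY : Yvec ((m + 1) * d) m σ j ∈ B) (l : Fin (m + 1)) :
    EuclideanSpace.single (blockIndex j l) (1 : ℝ) ∈ B := by
  have hli : LinearIndependent ℚ (blockEntries (m := m) σ j) := by
    have hinj : Function.Injective fun l => Option.map (·, j) (finSuccEquiv m l) :=
      (Option.map_injective fun _ _ h => (Prod.mk.inj h).1).comp (finSuccEquiv m).injective
    have hfamily : blockEntries σ j =
        (fun o => o.elim 1 fun p : Fin m × Fin d => σ p.1 p.2) ∘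
          fun l => Option.map (·, j) (finSuccEquiv m l) := by
      ext l
      induction l using Fin.cases <;> simp [blockEntries]
    rw [hfamily]
    exact hσ.linearIndependent_option_elim.comp _ hinj
  obtain ⟨f, hf⟩ := hli.exists_linearMap_apply_eq_single
  rw [← toLp_comp_Yvec σ j (Algebra.linearMap ℚ ℝ ∘ₗ Finsupp.lapply l ∘ₗ f) l
    (by simp [hf, Finsupp.single_apply, eq_comm])]
  exact hB.toLp_comp_mem _ hY

theorem card_mul_le_finrank_of_Yvec_mem {σ : ℕ → ℕ → ℝ}
    (hσ : AlgebraicIndependent ℚ fun p : Fin m × Fin d => σ p.1 p.2)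
    {B : Submodule ℝ (EuclideanSpace ℝ (Fin ((m + 1) * d)))} (hB : IsRationalSubspace B)
    {J : Finset (Fin d)} (hY : ∀ j ∈ J, Yvec ((m + 1) * d) m σ j ∈ B) :
    #J * (m + 1) ≤ finrank ℝ B := by
  let v : J × Fin (m + 1) → EuclideanSpace ℝ (Fin ((m + 1) * d)) :=
    fun p => EuclideanSpace.single (blockIndex p.1 p.2) 1
  have hinj : Function.Injective fun p : J × Fin (m + 1) => blockIndex p.1.1 p.2 :=
    fun p q h => Prod.ext (Subtype.ext (blockIndex_inj.mp h).1) (blockIndex_inj.mp h).2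
  have hv : LinearIndependent ℝ v := by
    simpa [v, Function.comp_def] using
      (EuclideanSpace.basisFun (Fin ((m + 1) * d)) ℝ).toBasis.linearIndependent.comp _ hinj
  have hle : Submodule.span ℝ (Set.range v) ≤ B :=
    Submodule.span_le.mpr <| Set.range_subset_iff.mpr fun p =>
      hB.single_blockIndex_mem hσ (hY _ p.1.2) p.2
  calc #J * (m + 1) = finrank ℝ (Submodule.span ℝ (Set.range v)) := by
        rw [finrank_span_eq_card hv]; simp
    _ ≤ finrank ℝ B := Submodule.finrank_mono hle

theorem linearIndependent_Yvec (σ : ℕ → ℕ → ℝ) :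
    LinearIndependent ℝ fun j : Fin d => Yvec ((m + 1) * d) m σ j :=
  .of_pairwise_dual_eq_zero_one _
    (fun i => (EuclideanSpace.proj (𝕜 := ℝ) (blockIndex (m := m) i 0)).toLinearMap)
    (fun i j hij => by
      simpa using Yvec_apply_of_forall_ne (m := m) (j := j) σ (t := blockIndex i 0)
        fun l => by simp [blockIndex_inj, hij])
    (fun i => by simp [Yvec_apply_blockIndex, blockEntries])

theorem finrank_span_Yvec (σ : ℕ → ℕ → ℝ) (J : Finset (Fin d)) :
    finrank ℝ (Submodule.span ℝ ((fun j : Fin d => Yvec ((m + 1) * d) m σ j) '' J)) = #J := by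
  rw [Set.image_eq_range]
  exact (finrank_span_eq_card ((linearIndependent_Yvec σ).comp _ Subtype.val_injective)).trans
    (by simp)

end Blocks

theorem statement16 (m d n : ℕ) (hn : n = (m + 1) * d)
    (σ : ℕ → ℕ → ℝ)
    (hσ : AlgebraicIndependent ℚ (fun p : Fin m × Fin d => σ (p.1 : ℕ) (p.2 : ℕ))) :
    ∀ J : Finset (Fin d), J.Nonempty → ∀ e, J.card ≤ e → e ≤ J.card * (m + 1) - 1 →
      IsIrrational
        (Submodule.span ℝ ((fun j : Fin d => Yvec n m σ (j : ℕ)) '' (J : Set (Fin d))))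
        e (J.card - (J.card + e - n)) := by
  subst hn
  intro J hJ e _ he B hB hBe
  set A := Submodule.span ℝ ((fun j : Fin d => Yvec ((m + 1) * d) m σ j) '' (J : Set (Fin d)))
  have hA : finrank ℝ A = #J := finrank_span_Yvec σ J
  have heJ : e < #J * (m + 1) := by
    have : 0 < #J * (m + 1) := Nat.mul_pos hJ.card_pos m.succ_pos
    omega
  have hJn : #J * (m + 1) ≤ (m + 1) * d := by
    rw [mul_comm]; exact Nat.mul_le_mul_left _ (card_le_univ J |>.trans_eq (Fintype.card_fin d))
  have hAB : ¬ A ≤ B := fun hAB =>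
    (card_mul_le_finrank_of_Yvec_mem hσ hB fun j hj =>
      hAB (Submodule.subset_span ⟨j, hj, rfl⟩)).not_gt (hBe ▸ heJ)
  have := Submodule.finrank_lt_finrank_of_lt (inf_lt_left.mpr hAB)
  rw [hA] at this ⊢
  omega
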